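/- Let p be an odd prime with p ≡ 3 (mod 4) and n an integer with gcd(n,p)=1. Then ∑_{χ mod p} |G(n,χ;p)|⁶ = (p-1)(10p³ - 25p² - 4p - 1), where G(n,χ;p) = ∑_{a=1}^{p-1} χ(a) e^{2πi n a²/p}. -/

import Mathlib

/-!
Write `ψ` for the standard additive character of `ZMod p` and
`f c = ∑_{v ≠ 0} ψ (n (c² - 1) v²)`. Substituting `u = c v` in `G · conj G` gives
`|G(n, χ; p)|² = ∑_{c ≠ 0} χ c · f c`, so orthogonality of characters turns the sixth moment into
`(p - 1) ∑_{x y z = 1} f x · f y · f z`. The quadratic Gauss sum gives `f = g L + p δ - 1`, where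
`g` is the Gauss sum of the Legendre symbol, with `g² = -p`, `L c = ((n (c² - 1)) / p)` and `δ` is
the indicator of `c = ±1`. As `(-1 / p) = -1`, `L (c⁻¹) = -L c` while `δ` is even, so the
terms of the expanded triple sum with an odd number of factors `L` vanish; the others reduce to
`∑ L = 0`, `∑ L² = p - 3` and `∑ δ = 2`.
-/

open Complex Finset

lemma sum_units_eq_sum_sub_zero {G₀ M : Type*} [GroupWithZero G₀] [Fintype G₀] [DecidableEq G₀]
    [AddCommGroup M] (F : G₀ → M) : ∑ u : G₀ˣ, F u = ∑ a, F a - F 0 := by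
  rw [eq_sub_iff_add_eq, ← sum_erase_add univ F (mem_univ 0),
    sum_subtype (p := (· ≠ 0)) _ (fun a => by simp) F]
  congr 1
  exact Fintype.sum_equiv unitsEquivNeZero _ _ fun _ => rfl

lemma sum_addChar_mul_sq {F R : Type*} [Field F] [Fintype F] [DecidableEq F] (hF : ringChar F ≠ 2)
    [CommRing R] [IsDomain R] {ψ : AddChar F R} (hψ : ψ.IsPrimitive) {m : F} (hm : m ≠ 0) :
    ∑ a, ψ (m * a ^ 2) = (quadraticChar F).ringHomComp (Int.castRingHom R) m
      * gaussSum ((quadraticChar F).ringHomComp (Int.castRingHom R)) ψ := by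
  set χ := (quadraticChar F).ringHomComp (Int.castRingHom R)
  have hsqrts (b : F) : (#{a | a ^ 2 = b} : R) = χ b + 1 := by
    have h := quadraticChar_card_sqrts hF b
    rw [Set.toFinset_ofPred] at h
    rw [MulChar.ringHomComp_apply, eq_intCast, ← Int.cast_one, ← Int.cast_add, ← h,
      Int.cast_natCast]
  have hlin : ∑ b, ψ (m * b) = 0 := by
    simpa [hm, mul_comm] using AddChar.sum_mulShift m hψ
  have hgauss : ∑ b, χ b * ψ (m * b) = χ m * gaussSum χ ψ := by
    have h := gaussSum_mulShift_eq χ ψ (Units.mk0 m hm)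
    rw [((quadraticChar_isQuadratic F).comp _).inv, Units.val_mk0] at h
    rw [← h]
    simp only [gaussSum, AddChar.mulShift_apply]
  calc ∑ a, ψ (m * a ^ 2) = ∑ b, ∑ a with a ^ 2 = b, ψ (m * b) :=
        (sum_fiberwise' univ (· ^ 2) fun b => ψ (m * b)).symm
    _ = ∑ b, χ b * ψ (m * b) + ∑ b, ψ (m * b) := by
        simp only [sum_const, nsmul_eq_mul, hsqrts, add_mul, one_mul, sum_add_distrib]
    _ = _ := by rw [hlin, add_zero, hgauss]

lemma MulChar.sum_mul_eq_sum_units {M R : Type*} [CommMonoidWithZero M] [Fintype M]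
    [DecidableEq M] [CommSemiring R] (χ : MulChar M R) (F : M → R) :
    ∑ a, χ a * F a = ∑ u : Mˣ, χ u * F u :=
  (Fintype.sum_of_injective _ Units.val_injective _ _
    (fun a ha => by rw [χ.map_nonunit fun h => ha h, zero_mul]) fun _ => rfl).symm

lemma MulChar.mul_starRingEnd_apply_units {R : Type*} [CommRing R] [Finite Rˣ] (χ : MulChar R ℂ)
    (u : Rˣ) : χ u * starRingEnd ℂ (χ u) = 1 := by
  rw [starRingEnd_apply, MulChar.star_apply', ← MulChar.mul_apply, mul_inv_cancel,
    MulChar.one_apply_coe]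

section SqEqOneIndicator

variable {G R : Type*} [CommGroup G] [DecidableEq G] [CommRing R]

def sqEqOneIndicator (x : G) : R := if x ^ 2 = 1 then 1 else 0

lemma sqEqOneIndicator_inv (x : G) : (sqEqOneIndicator x⁻¹ : R) = sqEqOneIndicator x := by
  simp only [sqEqOneIndicator, inv_pow, inv_eq_one]

lemma sqEqOneIndicator_mul {w : G} (hw : w ^ 2 = 1) (x : G) :
    (sqEqOneIndicator (w * x) : R) = sqEqOneIndicator x := by
  simp only [sqEqOneIndicator, mul_pow, hw, one_mul]

end SqEqOneIndicator

section TripleConvolution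

variable {G R : Type*} [CommGroup G] [Fintype G] [CommRing R]

def tripleConv (a b c : G → R) : R :=
  ∑ x, ∑ y, a x * b y * c (x * y)⁻¹

variable {a b c : G → R}

lemma tripleConv_comm_left : tripleConv a b c = tripleConv b a c := by
  unfold tripleConv
  rw [sum_comm]
  simp only [mul_comm (a _) (b _), mul_comm (_ : G) (_ : G)]

lemma tripleConv_comm_right : tripleConv a b c = tripleConv a c b := by
  unfold tripleConv
  refine sum_congr rfl fun x _ => ?_
  rw [← Equiv.sum_comp ((Equiv.mulLeft x).trans (Equiv.inv G))]
  refine sum_congr rfl fun y _ => ?_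
  simp only [Equiv.trans_apply, Equiv.coe_mulLeft, Equiv.inv_apply, mul_inv,
    mul_inv_cancel_left, inv_inv]
  ring

lemma tripleConv_const_right (r : R) :
    tripleConv a b (fun _ => r) = (∑ x, a x) * (∑ y, b y) * r := by
  simp only [tripleConv, sum_mul, mul_sum]
  exact sum_comm

lemma tripleConv_mul_add_right (s : R) (d : G → R) :
    tripleConv a b (fun x => s * c x + d x) = s * tripleConv a b c + tripleConv a b d := by
  simp only [tripleConv, mul_sum, ← sum_add_distrib]
  refine sum_congr rfl fun x _ => sum_congr rfl fun y _ => ?_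
  ring

lemma tripleConv_mul_add_self (s : R) (d : G → R) :
    tripleConv (fun x => s * c x + d x) (fun x => s * c x + d x) (fun x => s * c x + d x)
      = s ^ 3 * tripleConv c c c + 3 * s ^ 2 * tripleConv c c d + 3 * s * tripleConv c d d
        + tripleConv d d d := by
  have h1 : tripleConv c d c = tripleConv c c d := tripleConv_comm_right
  have h2 : tripleConv d c c = tripleConv c c d := by
    rw [tripleConv_comm_left, tripleConv_comm_right]
  have h3 : tripleConv d c d = tripleConv c d d := tripleConv_comm_left
  have h4 : tripleConv d d c = tripleConv c d d := by
    rw [tripleConv_comm_right, tripleConv_comm_left]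
  calc _ = s ^ 3 * tripleConv c c c
          + s ^ 2 * (tripleConv c c d + tripleConv c d c + tripleConv d c c)
          + s * (tripleConv c d d + tripleConv d c d + tripleConv d d c) + tripleConv d d d := by
        simp only [tripleConv, mul_sum, ← sum_add_distrib]
        refine sum_congr rfl fun x _ => sum_congr rfl fun y _ => ?_
        ring
    _ = _ := by rw [h1, h2, h3, h4]; ring

lemma tripleConv_eq_mul_self_of_map_inv {s t u : R} (ha : ∀ x, a x⁻¹ = s * a x)
    (hb : ∀ x, b x⁻¹ = t * b x) (hc : ∀ x, c x⁻¹ = u * c x) :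
    tripleConv a b c = s * t * u * tripleConv a b c := by
  have hc' (x : G) : c x = u * c x⁻¹ := by rw [← hc, inv_inv]
  calc tripleConv a b c = ∑ x, ∑ y, a x⁻¹ * b y⁻¹ * c (x⁻¹ * y⁻¹)⁻¹ := by
        unfold tripleConv
        rw [← Equiv.sum_comp (Equiv.inv G)]
        refine sum_congr rfl fun x _ => ?_
        rw [← Equiv.sum_comp (Equiv.inv G)]
        rfl
    _ = _ := by
        simp only [tripleConv, mul_sum, ha, hb, ← mul_inv, inv_inv, hc' (_ * _)]
        refine sum_congr rfl fun x _ => sum_congr rfl fun y _ => ?_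
        ring

lemma tripleConv_eq_zero_of_map_inv [NoZeroDivisors R] [CharZero R] {s t u : R}
    (ha : ∀ x, a x⁻¹ = s * a x) (hb : ∀ x, b x⁻¹ = t * b x) (hc : ∀ x, c x⁻¹ = u * c x)
    (hstu : s * t * u = -1) : tripleConv a b c = 0 := by
  have h := tripleConv_eq_mul_self_of_map_inv ha hb hc
  rw [hstu, neg_one_mul] at h
  exact CharZero.eq_neg_self_iff.mp h

variable [DecidableEq G]

lemma tripleConv_sqEqOneIndicator (hb : ∀ {w : G}, w ^ 2 = 1 → ∀ x, b (w * x) = b x) :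
    tripleConv a b sqEqOneIndicator = (∑ w : G, (sqEqOneIndicator w : R)) * ∑ x, a x * b x⁻¹ := by
  unfold tripleConv
  rw [mul_sum]
  refine sum_congr rfl fun x _ => ?_
  rw [← Equiv.sum_comp (Equiv.mulLeft x⁻¹), sum_mul]
  refine sum_congr rfl fun w _ => ?_
  simp only [Equiv.coe_mulLeft, mul_inv_cancel_left, sqEqOneIndicator_inv]
  unfold sqEqOneIndicator
  split_ifs with hw
  · rw [mul_comm x⁻¹, hb hw]; ring
  · ring

lemma tripleConv_sqEqOneIndicator_self :
    tripleConv (sqEqOneIndicator : G → R) sqEqOneIndicator sqEqOneIndicator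
      = (∑ w : G, (sqEqOneIndicator w : R)) ^ 2 := by
  rw [tripleConv_sqEqOneIndicator sqEqOneIndicator_mul, sq]
  congr 1
  refine sum_congr rfl fun x _ => ?_
  rw [sqEqOneIndicator_inv, sqEqOneIndicator]
  split_ifs <;> ring

end TripleConvolution

namespace DirichletCharacter

variable {N : ℕ} [NeZero N]

lemma sum_units_mul_addChar_mul_conj (χ : DirichletCharacter ℂ N) (ψ : AddChar (ZMod N) ℂ)
    (m : ZMod N) :
    (∑ u : (ZMod N)ˣ, χ u * ψ (m * u ^ 2)) * starRingEnd ℂ (∑ u : (ZMod N)ˣ, χ u * ψ (m * u ^ 2))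
      = ∑ c : (ZMod N)ˣ, χ c * ∑ v : (ZMod N)ˣ, ψ (m * ((c : ZMod N) ^ 2 - 1) * v ^ 2) := by
  have hterm (c v : (ZMod N)ˣ) :
      χ (c * v : (ZMod N)ˣ) * ψ (m * ((c * v : (ZMod N)ˣ) : ZMod N) ^ 2)
        * starRingEnd ℂ (χ v * ψ (m * v ^ 2))
      = χ c * ψ (m * ((c : ZMod N) ^ 2 - 1) * v ^ 2) := by
    have hψ : ψ (m * ((c * v : (ZMod N)ˣ) : ZMod N) ^ 2) * starRingEnd ℂ (ψ (m * v ^ 2))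
        = ψ (m * ((c : ZMod N) ^ 2 - 1) * v ^ 2) := by
      rw [← AddChar.map_neg_eq_conj, ← AddChar.map_add_eq_mul]
      congr 1
      push_cast
      ring
    rw [← hψ, Units.val_mul, map_mul χ, map_mul (starRingEnd ℂ)]
    linear_combination (χ c * ψ (m * (c * v : ZMod N) ^ 2) * starRingEnd ℂ (ψ (m * v ^ 2)))
      * χ.mul_starRingEnd_apply_units v
  calc _ = ∑ v : (ZMod N)ˣ, ∑ c : (ZMod N)ˣ, χ (c * v : (ZMod N)ˣ)
          * ψ (m * ((c * v : (ZMod N)ˣ) : ZMod N) ^ 2) * starRingEnd ℂ (χ v * ψ (m * v ^ 2)) := by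
        rw [map_sum, sum_mul_sum, sum_comm]
        exact sum_congr rfl fun v _ => (Equiv.sum_comp (Equiv.mulRight v) _).symm
    _ = _ := by
        simp only [hterm, mul_sum]
        exact sum_comm

lemma sum_pow_three_sum_units_mul (f : (ZMod N)ˣ → ℂ) :
    ∑ χ : DirichletCharacter ℂ N, (∑ c : (ZMod N)ˣ, χ c * f c) ^ 3
      = N.totient * tripleConv f f f := by
  have hcube (χ : DirichletCharacter ℂ N) : (∑ c : (ZMod N)ˣ, χ c * f c) ^ 3
      = ∑ x, ∑ y, ∑ z, χ (x * y * z : (ZMod N)ˣ) * (f x * f y * f z) := by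
    simp only [pow_three, sum_mul, mul_sum, Units.val_mul, map_mul]
    exact sum_congr rfl fun x _ => sum_congr rfl fun y _ => sum_congr rfl fun z _ => by ring
  simp only [hcube]
  rw [sum_comm]
  simp only [tripleConv, mul_sum]
  refine sum_congr rfl fun x _ => ?_
  rw [sum_comm]
  refine sum_congr rfl fun y _ => ?_
  rw [sum_comm]
  simp only [← sum_mul, sum_characters_eq, Units.val_eq_one, mul_eq_one_iff_eq_inv', ite_mul,
    zero_mul, sum_ite_eq']
  simp

end DirichletCharacter

lemma ZMod.ringChar_ne_two {N : ℕ} (hN : N ≠ 2) : ringChar (ZMod N) ≠ 2 := by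
  rwa [ZMod.ringChar_zmod_n]

lemma ZMod.intCast_ne_zero_of_gcd_eq_one {N : ℕ} (hN : N ≠ 1) {n : ℤ} (hn : Int.gcd n N = 1) :
    (n : ZMod N) ≠ 0 := by
  rw [Ne, ZMod.intCast_zmod_eq_zero_iff_dvd]
  intro hdvd
  have h := Int.dvd_coe_gcd hdvd dvd_rfl
  rw [hn, Nat.cast_one, Int.natCast_dvd_ofNat, Nat.dvd_one] at h
  exact hN h

lemma ZMod.stdAddChar_intCast_mul_sq {N : ℕ} [NeZero N] (n : ℤ) (a : ZMod N) :
    ZMod.stdAddChar ((n : ZMod N) * a ^ 2) = exp (2 * Real.pi * I * n * (a.val : ℂ) ^ 2 / N) := by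
  have h : ((n * (a.val : ℤ) ^ 2 : ℤ) : ZMod N) = (n : ZMod N) * a ^ 2 := by
    push_cast
    rw [ZMod.natCast_val, ZMod.cast_id]
  rw [← h, ZMod.stdAddChar_coe]
  push_cast
  ring_nf

section ZModPrime

variable {p : ℕ} [Fact p.Prime]

noncomputable def complexQuadraticChar (p : ℕ) [Fact p.Prime] : MulChar (ZMod p) ℂ :=
  (quadraticChar (ZMod p)).ringHomComp (Int.castRingHom ℂ)

lemma complexQuadraticChar_neg_one (h4 : p % 4 = 3) : complexQuadraticChar p (-1) = -1 := by
  rw [complexQuadraticChar, MulChar.ringHomComp_apply,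
    quadraticChar_neg_one (ZMod.ringChar_ne_two (by omega)), ZMod.card,
    ZMod.χ₄_nat_three_mod_four h4]
  simp

lemma complexQuadraticChar_sq {x : ZMod p} (hx : x ≠ 0) : complexQuadraticChar p (x ^ 2) = 1 := by
  rw [complexQuadraticChar, MulChar.ringHomComp_apply, quadraticChar_sq_one' hx, map_one]

lemma gaussSum_complexQuadraticChar_sq (h4 : p % 4 = 3) :
    gaussSum (complexQuadraticChar p) ZMod.stdAddChar ^ 2 = -p := by
  rw [gaussSum_sq (χ := complexQuadraticChar p)
      ((MulChar.ringHomComp_ne_one_iff (RingHom.injective_int _)).mpr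
        (quadraticChar_ne_one (ZMod.ringChar_ne_two (by omega))))
      ((quadraticChar_isQuadratic (ZMod p)).comp _) (ZMod.isPrimitive_stdAddChar p),
    complexQuadraticChar_neg_one h4, ZMod.card]
  ring

lemma ZMod.natCast_card_units : (Fintype.card (ZMod p)ˣ : ℂ) = p - 1 := by
  rw [ZMod.card_units, Nat.cast_sub (Fact.out : p.Prime).one_le, Nat.cast_one]

lemma sum_units_stdAddChar_mul_sq (hp2 : p ≠ 2) (m : ZMod p) :
    ∑ v : (ZMod p)ˣ, ZMod.stdAddChar (m * (v : ZMod p) ^ 2)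
      = gaussSum (complexQuadraticChar p) ZMod.stdAddChar * complexQuadraticChar p m
        + (p * if m = 0 then 1 else 0) - 1 := by
  rw [sum_units_eq_sum_sub_zero fun a : ZMod p => ZMod.stdAddChar (m * a ^ 2)]
  split_ifs with hm
  · simp [hm, ZMod.card, MulChar.map_zero]
  · rw [sum_addChar_mul_sq (ZMod.ringChar_ne_two hp2) (ZMod.isPrimitive_stdAddChar p) hm]
    simp [complexQuadraticChar, mul_comm]

variable (n : ZMod p)

noncomputable def quadCharSqSubOne (c : (ZMod p)ˣ) : ℂ :=
  complexQuadraticChar p (n * ((c : ZMod p) ^ 2 - 1))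

lemma quadCharSqSubOne_inv (h4 : p % 4 = 3) (c : (ZMod p)ˣ) :
    quadCharSqSubOne n c⁻¹ = -quadCharSqSubOne n c := by
  have hc : (c : ZMod p) ≠ 0 := c.ne_zero
  have harg : n * ((c⁻¹ : (ZMod p)ˣ) ^ 2 - 1 : ZMod p)
      = -1 * (c : ZMod p)⁻¹ ^ 2 * (n * ((c : ZMod p) ^ 2 - 1)) := by
    rw [Units.val_inv_eq_inv_val]
    field_simp
    ring
  rw [quadCharSqSubOne, quadCharSqSubOne, harg, map_mul, map_mul,
    complexQuadraticChar_sq (inv_ne_zero hc), complexQuadraticChar_neg_one h4]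
  ring

lemma quadCharSqSubOne_mul {w : (ZMod p)ˣ} (hw : w ^ 2 = 1) (c : (ZMod p)ˣ) :
    quadCharSqSubOne n (w * c) = quadCharSqSubOne n c := by
  rw [quadCharSqSubOne, quadCharSqSubOne, Units.val_mul, mul_pow, ← Units.val_pow_eq_pow_val, hw,
    Units.val_one, one_mul]

lemma quadCharSqSubOne_sq (hn : n ≠ 0) (c : (ZMod p)ˣ) :
    quadCharSqSubOne n c ^ 2 = 1 - sqEqOneIndicator c := by
  have hsq : c ^ 2 = 1 ↔ (c : ZMod p) ^ 2 = 1 := by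
    rw [Units.ext_iff, Units.val_pow_eq_pow_val, Units.val_one]
  rw [quadCharSqSubOne, sqEqOneIndicator]
  split_ifs with hc
  · rw [hsq.mp hc, sub_self, mul_zero, MulChar.map_zero]
    ring
  · rw [← map_pow, complexQuadraticChar_sq (mul_ne_zero hn (sub_ne_zero.mpr (hsq.not.mp hc)))]
    ring

lemma sum_quadCharSqSubOne (h4 : p % 4 = 3) : ∑ c, quadCharSqSubOne n c = 0 := by
  have h := Equiv.sum_comp (Equiv.inv (ZMod p)ˣ) (quadCharSqSubOne n)
  simp only [Equiv.inv_apply, quadCharSqSubOne_inv n h4, sum_neg_distrib, neg_eq_iff_add_eq_zero]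
    at h
  exact add_self_eq_zero.mp h

lemma sum_sqEqOneIndicator_zmod_units (hp2 : p ≠ 2) :
    ∑ c : (ZMod p)ˣ, (sqEqOneIndicator c : ℂ) = 2 := by
  have : Fact (2 < p) := ⟨lt_of_le_of_ne (Fact.out : p.Prime).two_le (Ne.symm hp2)⟩
  have hroots : ({c | c ^ 2 = 1} : Finset (ZMod p)ˣ) = {1, -1} := by
    ext c
    simp only [mem_filter, mem_univ, true_and, mem_insert, mem_singleton, Units.ext_iff,
      Units.val_pow_eq_pow_val, Units.val_one, Units.val_neg, sq_eq_one_iff]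
  have hne : (1 : (ZMod p)ˣ) ≠ -1 := fun h =>
    ZMod.neg_one_ne_one (by simpa [Units.ext_iff] using h.symm)
  simp only [sqEqOneIndicator, sum_boole, hroots, card_pair hne]
  norm_num

lemma sum_quadCharSqSubOne_mul_inv (hp2 : p ≠ 2) (h4 : p % 4 = 3) (hn : n ≠ 0) :
    ∑ c, quadCharSqSubOne n c * quadCharSqSubOne n c⁻¹ = 3 - p := by
  simp only [quadCharSqSubOne_inv n h4, mul_neg, ← sq, quadCharSqSubOne_sq n hn, neg_sub,
    sum_sub_distrib, sum_sqEqOneIndicator_zmod_units hp2, sum_const, card_univ, nsmul_one,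
    ZMod.natCast_card_units]
  ring

lemma sum_units_stdAddChar_mul_sq_sub_one (hp2 : p ≠ 2) (hn : n ≠ 0) (c : (ZMod p)ˣ) :
    ∑ v : (ZMod p)ˣ, ZMod.stdAddChar (n * ((c : ZMod p) ^ 2 - 1) * (v : ZMod p) ^ 2)
      = gaussSum (complexQuadraticChar p) ZMod.stdAddChar * quadCharSqSubOne n c
        + p * sqEqOneIndicator c - 1 := by
  have hzero : n * ((c : ZMod p) ^ 2 - 1) = 0 ↔ c ^ 2 = 1 := by
    rw [mul_eq_zero, or_iff_right hn, sub_eq_zero, Units.ext_iff, Units.val_pow_eq_pow_val,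
      Units.val_one]
  rw [sum_units_stdAddChar_mul_sq hp2, quadCharSqSubOne, sqEqOneIndicator]
  simp only [hzero]

lemma tripleConv_eq_of_forall_eq_gaussSum_mul_add (hp2 : p ≠ 2) (h4 : p % 4 = 3) (hn : n ≠ 0)
    {f : (ZMod p)ˣ → ℂ} (hf : ∀ c, f c = gaussSum (complexQuadraticChar p) ZMod.stdAddChar
      * quadCharSqSubOne n c + p * sqEqOneIndicator c - 1) :
    tripleConv f f f = 10 * (p : ℂ) ^ 3 - 25 * (p : ℂ) ^ 2 - 4 * p - 1 := by
  obtain rfl : f = fun c => gaussSum (complexQuadraticChar p) ZMod.stdAddChar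
      * quadCharSqSubOne n c + (p * sqEqOneIndicator c + -1) :=
    funext fun c => by rw [hf]; ring
  set L := quadCharSqSubOne n
  set δ : (ZMod p)ˣ → ℂ := sqEqOneIndicator
  set h : (ZMod p)ˣ → ℂ := fun c => p * δ c + -1
  have hL_inv (x : (ZMod p)ˣ) : L x⁻¹ = -1 * L x :=
    (quadCharSqSubOne_inv n h4 x).trans (neg_one_mul _).symm
  have hh_inv (x : (ZMod p)ˣ) : h x⁻¹ = 1 * h x := by
    simp only [h, δ, sqEqOneIndicator_inv, one_mul]
  have hsum_neg_one : ∑ _x : (ZMod p)ˣ, (-1 : ℂ) = -(p - 1) := by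
    rw [sum_const, card_univ, nsmul_eq_mul, ZMod.natCast_card_units, mul_neg_one]
  have hLLL : tripleConv L L L = 0 :=
    tripleConv_eq_zero_of_map_inv hL_inv hL_inv hL_inv (by norm_num)
  have hLhh : tripleConv L h h = 0 :=
    tripleConv_eq_zero_of_map_inv hL_inv hh_inv hh_inv (by norm_num)
  have hLLh : tripleConv L L h = 2 * p * (3 - p) := by
    rw [tripleConv_mul_add_right, tripleConv_sqEqOneIndicator (quadCharSqSubOne_mul n),
      tripleConv_const_right, sum_quadCharSqSubOne n h4, sum_sqEqOneIndicator_zmod_units hp2,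
      sum_quadCharSqSubOne_mul_inv n hp2 h4 hn]
    ring
  have hhhh : tripleConv h h h = 4 * (p : ℂ) ^ 3 - 7 * (p : ℂ) ^ 2 - 4 * p - 1 := by
    rw [tripleConv_mul_add_self (s := (p : ℂ)) (d := fun _ => -1), tripleConv_sqEqOneIndicator_self,
      tripleConv_const_right, tripleConv_const_right, tripleConv_const_right,
      sum_sqEqOneIndicator_zmod_units hp2, hsum_neg_one]
    ring
  rw [tripleConv_mul_add_self, hLLL, hLLh, hLhh, hhhh]
  linear_combination (6 * (p : ℂ) * (3 - p)) * gaussSum_complexQuadraticChar_sq h4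

end ZModPrime

theorem sixth_power_mean_three_mod_four_general (p : ℕ) [Fact p.Prime]
    (h4 : p % 4 = 3) (n : ℤ) (hn : Int.gcd n p = 1) :
    ∑ χ : DirichletCharacter ℂ p,
        (‖(∑ a : ZMod p, χ a *
          Complex.exp (2 * Real.pi * I * n * (a.val : ℂ) ^ 2 / p))‖) ^ 6
      = ((p : ℝ) - 1) * (10 * (p : ℝ) ^ 3 - 25 * (p : ℝ) ^ 2 - 4 * p - 1) := by
  have hp2 : p ≠ 2 := by omega
  have hn0 : (n : ZMod p) ≠ 0 := ZMod.intCast_ne_zero_of_gcd_eq_one (Fact.out : p.Prime).ne_one hn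
  have hG (χ : DirichletCharacter ℂ p) :
      (‖∑ a : ZMod p, χ a * exp (2 * Real.pi * I * n * (a.val : ℂ) ^ 2 / p)‖ : ℂ) ^ 6
        = (∑ c : (ZMod p)ˣ, χ c * ∑ v : (ZMod p)ˣ,
            ZMod.stdAddChar ((n : ZMod p) * ((c : ZMod p) ^ 2 - 1) * (v : ZMod p) ^ 2)) ^ 3 := by
    simp only [← ZMod.stdAddChar_intCast_mul_sq]
    rw [MulChar.sum_mul_eq_sum_units, ← DirichletCharacter.sum_units_mul_addChar_mul_conj,
      mul_conj, normSq_eq_norm_sq]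
    push_cast
    ring
  apply ofReal_injective
  push_cast
  simp only [hG]
  rw [DirichletCharacter.sum_pow_three_sum_units_mul, tripleConv_eq_of_forall_eq_gaussSum_mul_add _
    hp2 h4 hn0 (sum_units_stdAddChar_mul_sq_sub_one _ hp2 hn0), Nat.totient_prime Fact.out,
    Nat.cast_pred (Fact.out : p.Prime).pos]

theorem sixth_power_mean_three_mod_four (p : ℕ) [Fact p.Prime] (hp2 : p ≠ 2)
    (h4 : p % 4 = 3) (n : ℤ) (hn : Int.gcd n p = 1) :
    ∑ χ : DirichletCharacter ℂ p,
        (‖(∑ a : ZMod p, χ a *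
          Complex.exp (2 * Real.pi * I * n * (a.val : ℂ) ^ 2 / p))‖) ^ 6
      = ((p : ℝ) - 1) * (10 * (p : ℝ) ^ 3 - 25 * (p : ℝ) ^ 2 - 4 * p - 1) :=
  sixth_power_mean_three_mod_four_general p h4 n hn
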